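/- arXiv:2506.13054 — 2 statements merged into one kernel-verified Lean document; each statement's English description precedes it below -/
import Mathlib

section
/- With L_h the periodic discrete Slotboom operator defined via harmonic means of e^φ, if u_{i,j} > 0 for all i,j, then Σ_{i,j} (L_h u)_{i,j} · ln(u_{i,j}/e^{φ_{i,j}}) ≤ 0. -/
/-- Harmonic mean. -/
noncomputable def hmean (a b : ℝ) : ℝ := 2 * a * b / (a + b)

/-- The four periodic neighbors of a grid point. -/
def nbrs {N : ℕ} (p : ZMod N × ZMod N) : List (ZMod N × ZMod N) :=
  [(p.1 + 1, p.2), (p.1 - 1, p.2), (p.1, p.2 + 1), (p.1, p.2 - 1)]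

/-- The discrete Slotboom operator with harmonic-mean weights. -/
noncomputable def Lh {N : ℕ} (h : ℝ) (φ u : ZMod N × ZMod N → ℝ)
    (p : ZMod N × ZMod N) : ℝ :=
  (1 / h ^ 2) *
    ((nbrs p).map (fun q =>
      hmean (Real.exp (φ q)) (Real.exp (φ p)) *
        (u q / Real.exp (φ q) - u p / Real.exp (φ p)))).sum

lemma pair_nonpos (a b x y : ℝ) (ha : 0 < a) (hb : 0 < b) (hx : 0 < x) (hy : 0 < y) :
    hmean a b * (y - x) * Real.log x + hmean b a * (x - y) * Real.log y ≤ 0 := by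
  have hsym : hmean b a = hmean a b := by unfold hmean; ring_nf
  have hpos : 0 < hmean a b := by
    unfold hmean
    positivity
  rw [hsym]
  have hfac : hmean a b * (y - x) * Real.log x + hmean a b * (x - y) * Real.log y
      = hmean a b * ((y - x) * (Real.log x - Real.log y)) := by ring
  rw [hfac]
  apply mul_nonpos_of_nonneg_of_nonpos hpos.le
  rcases le_total x y with hle | hle
  · have : Real.log x ≤ Real.log y := Real.log_le_log hx hle
    exact mul_nonpos_of_nonneg_of_nonpos (by linarith) (by linarith)
  · have : Real.log y ≤ Real.log x := Real.log_le_log hy hle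
    exact mul_nonpos_of_nonpos_of_nonneg (by linarith) (by linarith)

theorem stmt_3 (N : ℕ) [NeZero N] (h : ℝ) (hh : 0 < h)
    (φ u : ZMod N × ZMod N → ℝ) (hu : ∀ p, 0 < u p) :
    ∑ p : ZMod N × ZMod N, Lh h φ u p * Real.log (u p / Real.exp (φ p)) ≤ 0 := by
  set v : ZMod N × ZMod N → ℝ := fun p => u p / Real.exp (φ p) with hv
  have hvpos : ∀ p, 0 < v p := fun p => div_pos (hu p) (Real.exp_pos _)
  set F : ZMod N × ZMod N → ZMod N × ZMod N → ℝ := fun p q =>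
    hmean (Real.exp (φ q)) (Real.exp (φ p)) * (v q - v p) * Real.log (v p) with hF
  have step1 : ∑ p : ZMod N × ZMod N, Lh h φ u p * Real.log (u p / Real.exp (φ p))
      = (1 / h ^ 2) * ∑ p : ZMod N × ZMod N,
          (F p (p.1 + 1, p.2) + F p (p.1 - 1, p.2) + F p (p.1, p.2 + 1) + F p (p.1, p.2 - 1)) := by
    rw [Finset.mul_sum]
    refine Finset.sum_congr rfl fun p _ => ?_
    simp only [Lh, nbrs, List.map_cons, List.map_nil, List.sum_cons, List.sum_nil, hF, hv]
    ring
  rw [step1]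
  apply mul_nonpos_of_nonneg_of_nonpos (by positivity)
  have hσ1 : ∀ g : ZMod N × ZMod N → ℝ,
      (∑ p : ZMod N × ZMod N, g (p.1 + 1, p.2)) = ∑ p : ZMod N × ZMod N, g p :=
    fun g => Fintype.sum_equiv ((Equiv.addRight (1 : ZMod N)).prodCongr (Equiv.refl _)) _ _
      (fun p => rfl)
  have hσ2 : ∀ g : ZMod N × ZMod N → ℝ,
      (∑ p : ZMod N × ZMod N, g (p.1, p.2 + 1)) = ∑ p : ZMod N × ZMod N, g p :=
    fun g => Fintype.sum_equiv ((Equiv.refl _).prodCongr (Equiv.addRight (1 : ZMod N))) _ _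
      (fun p => rfl)
  have e1 : (∑ p : ZMod N × ZMod N, F p (p.1 - 1, p.2))
      = ∑ p : ZMod N × ZMod N, F (p.1 + 1, p.2) p := by
    rw [← hσ1 (fun p => F p (p.1 - 1, p.2))]
    refine Finset.sum_congr rfl fun p _ => ?_
    simp [add_sub_cancel_right]
  have e2 : (∑ p : ZMod N × ZMod N, F p (p.1, p.2 - 1))
      = ∑ p : ZMod N × ZMod N, F (p.1, p.2 + 1) p := by
    rw [← hσ2 (fun p => F p (p.1, p.2 - 1))]
    refine Finset.sum_congr rfl fun p _ => ?_
    simp [add_sub_cancel_right]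
  have split : ∑ p : ZMod N × ZMod N,
      (F p (p.1 + 1, p.2) + F p (p.1 - 1, p.2) + F p (p.1, p.2 + 1) + F p (p.1, p.2 - 1))
      = ∑ p : ZMod N × ZMod N,
      ((F p (p.1 + 1, p.2) + F (p.1 + 1, p.2) p) + (F p (p.1, p.2 + 1) + F (p.1, p.2 + 1) p)) := by
    simp only [Finset.sum_add_distrib, e1, e2]
    ring
  rw [split]
  apply Finset.sum_nonpos
  intro p _
  have h1 : F p (p.1 + 1, p.2) + F (p.1 + 1, p.2) p ≤ 0 := by
    simpa [hF] using pair_nonpos (Real.exp (φ (p.1 + 1, p.2))) (Real.exp (φ p))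
      (v p) (v (p.1 + 1, p.2)) (Real.exp_pos _) (Real.exp_pos _) (hvpos p) (hvpos _)
  have h2 : F p (p.1, p.2 + 1) + F (p.1, p.2 + 1) p ≤ 0 := by
    simpa [hF] using pair_nonpos (Real.exp (φ (p.1, p.2 + 1))) (Real.exp (φ p))
      (v p) (v (p.1, p.2 + 1)) (Real.exp_pos _) (Real.exp_pos _) (hvpos p) (hvpos _)
  linarith
end

section
/- Under the summation-by-parts rearrangement on a periodic grid, Σ_{i,j} (L_h u)_{i,j} v_{i,j} = −(1/h²) Σ over edges e = {(i,j),(i',j')} of H(e^{φ_{i,j}}, e^{φ_{i',j'}}) · (u_{i',j'}/e^{φ_{i',j'}} − u_{i,j}/e^{φ_{i,j}}) · (v_{i',j'} − v_{i,j}). -/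
/-- Edge contribution from `p` to `q`. -/
noncomputable def edgeTerm {N : ℕ} (φ u v : ZMod N × ZMod N → ℝ)
    (p q : ZMod N × ZMod N) : ℝ :=
  hmean (Real.exp (φ p)) (Real.exp (φ q)) *
    (u q / Real.exp (φ q) - u p / Real.exp (φ p)) * (v q - v p)

/-- Directed flux from `p` to `q`. -/
noncomputable def Hd {N : ℕ} (φ u : ZMod N × ZMod N → ℝ) (p q : ZMod N × ZMod N) : ℝ :=
  hmean (Real.exp (φ p)) (Real.exp (φ q)) * (u q / Real.exp (φ q) - u p / Real.exp (φ p))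

lemma Hd_anti {N : ℕ} (φ u : ZMod N × ZMod N → ℝ) (p q : ZMod N × ZMod N) :
    Hd φ u q p = - Hd φ u p q := by
  unfold Hd hmean; ring

lemma edgeTerm_eq {N : ℕ} (φ u v : ZMod N × ZMod N → ℝ) (p q : ZMod N × ZMod N) :
    edgeTerm φ u v p q = Hd φ u p q * v q - Hd φ u p q * v p := by
  unfold edgeTerm Hd; ring

lemma Lh_mul_eq {N : ℕ} (h : ℝ) (φ u v : ZMod N × ZMod N → ℝ) (p : ZMod N × ZMod N) :
    Lh h φ u p * v p = (1 / h ^ 2) *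
      (Hd φ u p (p.1 + 1, p.2) * v p + Hd φ u p (p.1 - 1, p.2) * v p
        + Hd φ u p (p.1, p.2 + 1) * v p + Hd φ u p (p.1, p.2 - 1) * v p) := by
  simp only [Lh, nbrs, List.map_cons, List.map_nil, List.sum_cons, List.sum_nil, add_zero,
    Hd, hmean]
  ring

lemma shift_h {N : ℕ} [NeZero N] (g : ZMod N × ZMod N → ℝ) :
    ∑ p : ZMod N × ZMod N, g (p.1 - 1, p.2) = ∑ p : ZMod N × ZMod N, g p := by
  apply Fintype.sum_equiv ((Equiv.subRight (1 : ZMod N)).prodCongr (Equiv.refl _))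
  intro p; rfl

lemma shift_v {N : ℕ} [NeZero N] (g : ZMod N × ZMod N → ℝ) :
    ∑ p : ZMod N × ZMod N, g (p.1, p.2 - 1) = ∑ p : ZMod N × ZMod N, g p := by
  apply Fintype.sum_equiv ((Equiv.refl _).prodCongr (Equiv.subRight (1 : ZMod N)))
  intro p; rfl

lemma edge_sum_h {N : ℕ} [NeZero N] (φ u v : ZMod N × ZMod N → ℝ) :
    ∑ p : ZMod N × ZMod N, edgeTerm φ u v p (p.1 + 1, p.2)
      = - (∑ p : ZMod N × ZMod N, Hd φ u p (p.1 + 1, p.2) * v p)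
        - (∑ p : ZMod N × ZMod N, Hd φ u p (p.1 - 1, p.2) * v p) := by
  have h1 : ∑ p : ZMod N × ZMod N, Hd φ u p (p.1 + 1, p.2) * v (p.1 + 1, p.2)
      = ∑ p : ZMod N × ZMod N, Hd φ u (p.1 - 1, p.2) p * v p := by
    rw [← shift_h (fun p => Hd φ u p (p.1 + 1, p.2) * v (p.1 + 1, p.2))]
    apply Finset.sum_congr rfl
    intro p _
    have hx : p.1 - 1 + 1 = p.1 := by ring
    simp only [hx]
  calc ∑ p : ZMod N × ZMod N, edgeTerm φ u v p (p.1 + 1, p.2)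
      = ∑ p : ZMod N × ZMod N, (Hd φ u p (p.1 + 1, p.2) * v (p.1 + 1, p.2)
          - Hd φ u p (p.1 + 1, p.2) * v p) :=
        Finset.sum_congr rfl fun p _ => edgeTerm_eq φ u v p _
    _ = (∑ p : ZMod N × ZMod N, Hd φ u p (p.1 + 1, p.2) * v (p.1 + 1, p.2))
          - ∑ p : ZMod N × ZMod N, Hd φ u p (p.1 + 1, p.2) * v p := by
        rw [Finset.sum_sub_distrib]
    _ = (∑ p : ZMod N × ZMod N, - (Hd φ u p (p.1 - 1, p.2) * v p))
          - ∑ p : ZMod N × ZMod N, Hd φ u p (p.1 + 1, p.2) * v p := by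
        rw [h1]
        congr 1
        apply Finset.sum_congr rfl
        intro p _
        rw [Hd_anti]; ring
    _ = _ := by rw [Finset.sum_neg_distrib]; ring

lemma edge_sum_v {N : ℕ} [NeZero N] (φ u v : ZMod N × ZMod N → ℝ) :
    ∑ p : ZMod N × ZMod N, edgeTerm φ u v p (p.1, p.2 + 1)
      = - (∑ p : ZMod N × ZMod N, Hd φ u p (p.1, p.2 + 1) * v p)
        - (∑ p : ZMod N × ZMod N, Hd φ u p (p.1, p.2 - 1) * v p) := by
  have h1 : ∑ p : ZMod N × ZMod N, Hd φ u p (p.1, p.2 + 1) * v (p.1, p.2 + 1)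
      = ∑ p : ZMod N × ZMod N, Hd φ u (p.1, p.2 - 1) p * v p := by
    rw [← shift_v (fun p => Hd φ u p (p.1, p.2 + 1) * v (p.1, p.2 + 1))]
    apply Finset.sum_congr rfl
    intro p _
    have hx : p.2 - 1 + 1 = p.2 := by ring
    simp only [hx]
  calc ∑ p : ZMod N × ZMod N, edgeTerm φ u v p (p.1, p.2 + 1)
      = ∑ p : ZMod N × ZMod N, (Hd φ u p (p.1, p.2 + 1) * v (p.1, p.2 + 1)
          - Hd φ u p (p.1, p.2 + 1) * v p) :=
        Finset.sum_congr rfl fun p _ => edgeTerm_eq φ u v p _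
    _ = (∑ p : ZMod N × ZMod N, Hd φ u p (p.1, p.2 + 1) * v (p.1, p.2 + 1))
          - ∑ p : ZMod N × ZMod N, Hd φ u p (p.1, p.2 + 1) * v p := by
        rw [Finset.sum_sub_distrib]
    _ = (∑ p : ZMod N × ZMod N, - (Hd φ u p (p.1, p.2 - 1) * v p))
          - ∑ p : ZMod N × ZMod N, Hd φ u p (p.1, p.2 + 1) * v p := by
        rw [h1]
        congr 1
        apply Finset.sum_congr rfl
        intro p _
        rw [Hd_anti]; ring
    _ = _ := by rw [Finset.sum_neg_distrib]; ring

/-- Summation by parts: each unordered edge of the periodic grid is enumerated once,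
as the rightward and upward edge emanating from each vertex. -/
theorem stmt_4 (N : ℕ) [NeZero N] (h : ℝ) (hh : 0 < h)
    (φ u v : ZMod N × ZMod N → ℝ) :
    ∑ p : ZMod N × ZMod N, Lh h φ u p * v p =
      -(1 / h ^ 2) * ∑ p : ZMod N × ZMod N,
        (edgeTerm φ u v p (p.1 + 1, p.2) + edgeTerm φ u v p (p.1, p.2 + 1)) := by
  have hL : ∑ p : ZMod N × ZMod N, Lh h φ u p * v p
      = (1 / h ^ 2) *
        ((∑ p : ZMod N × ZMod N, Hd φ u p (p.1 + 1, p.2) * v p)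
          + (∑ p : ZMod N × ZMod N, Hd φ u p (p.1 - 1, p.2) * v p)
          + (∑ p : ZMod N × ZMod N, Hd φ u p (p.1, p.2 + 1) * v p)
          + (∑ p : ZMod N × ZMod N, Hd φ u p (p.1, p.2 - 1) * v p)) := by
    rw [← Finset.sum_add_distrib, ← Finset.sum_add_distrib, ← Finset.sum_add_distrib, Finset.mul_sum]
    exact Finset.sum_congr rfl fun p _ => Lh_mul_eq h φ u v p
  rw [hL, Finset.sum_add_distrib, edge_sum_h, edge_sum_v]
  ring
end
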